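/- Let (A₀, ⟪·,·⟫₁) and (B₀, ⟪·,·⟫₂) be Hilbert algebras over ℂ (not necessarily unital), and let B be the sesquilinear form on the tensor product *-algebra A₀ ⊗[ℂ] B₀ determined by B(x ⊗ y, x' ⊗ y') = ⟪x, x'⟫₁⟪y, y'⟫₂ (an inner product), with induced norm ‖·‖_B. Then the linear span of the set of products {zw : z, w ∈ A₀ ⊗[ℂ] B₀} is dense in A₀ ⊗[ℂ] B₀ with respect to ‖·‖_B. -/

import Mathlib

/-!
Since `‖x ⊗ y‖_B = ‖x‖₁ ‖y‖₂`, the map `(x, y) ↦ x ⊗ y` is jointly continuous, so the closure of the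
span of `{a ⊗ b : a ∈ S_A, b ∈ S_B}` contains every simple tensor whenever `S_A` and `S_B` are dense;
being an additive subgroup, it is then everything. Taking for `S_A`, `S_B` the spans of products,
`(x x') ⊗ (y y') = (x ⊗ y)(x' ⊗ y')` puts that span inside the span of products of `A₀ ⊗ B₀`.
-/

open scoped TensorProduct ComplexConjugate

open Submodule Set

section SpanMul

variable {R A B : Type*} [CommSemiring R]
  [NonUnitalNonAssocSemiring A] [Module R A] [SMulCommClass R A A] [IsScalarTower R A A]
  [NonUnitalNonAssocSemiring B] [Module R B] [SMulCommClass R B B] [IsScalarTower R B B]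

theorem span_image2_tmul_span_mul_le :
    span R (image2 (· ⊗ₜ[R] ·) (span R {p : A | ∃ x y : A, p = x * y} : Set A)
        (span R {p : B | ∃ x y : B, p = x * y} : Set B)) ≤
      span R {p : A ⊗[R] B | ∃ z z' : A ⊗[R] B, p = z * z'} := by
  rw [span_le]
  rintro _ ⟨a, ha, b, hb, rfl⟩
  have hab : a ⊗ₜ[R] b ∈ map₂ (TensorProduct.mk R A B) _ _ := apply_mem_map₂ _ ha hb
  rw [map₂_span_span] at hab
  refine span_le.mpr ?_ hab
  rintro _ ⟨_, ⟨x, y, rfl⟩, _, ⟨u, v, rfl⟩, rfl⟩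
  exact subset_span ⟨x ⊗ₜ u, y ⊗ₜ v, (Algebra.TensorProduct.tmul_mul_tmul x y u v).symm⟩

end SpanMul

theorem TensorProduct.dense_span_image2_tmul {R M N : Type*} [CommSemiring R]
    [AddCommMonoid M] [Module R M] [AddCommMonoid N] [Module R N]
    [TopologicalSpace M] [TopologicalSpace N] [TopologicalSpace (M ⊗[R] N)]
    [ContinuousAdd (M ⊗[R] N)] (hcont : Continuous fun p : M × N => p.1 ⊗ₜ[R] p.2)
    {s : Set M} {t : Set N} (hs : Dense s) (ht : Dense t) :
    Dense (span R (image2 (· ⊗ₜ[R] ·) s t) : Set (M ⊗[R] N)) := by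
  set S := (span R (image2 (· ⊗ₜ[R] ·) s t)).toAddSubmonoid
  have htmul : ∀ x y, x ⊗ₜ[R] y ∈ S.topologicalClosure := by
    intro x y
    have hxy : (x, y) ∈ closure (s ×ˢ t) := by
      simp only [closure_prod_eq, hs.closure_eq, ht.closure_eq, univ_prod_univ, mem_univ]
    have h := map_mem_closure hcont hxy (mapsTo_image _ _)
    rw [image_prod] at h
    exact closure_mono subset_span h
  intro z
  induction z using TensorProduct.induction_on with
  | zero => exact S.topologicalClosure.zero_mem
  | tmul x y => exact htmul x y
  | add z w hz hw => exact S.topologicalClosure.add_mem hz hw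

theorem dense_iff_forall_exists_norm_sub_lt {E : Type*} [SeminormedAddCommGroup E] {s : Set E} :
    Dense s ↔ ∀ a : E, ∀ ε : ℝ, 0 < ε → ∃ b ∈ s, ‖a - b‖ < ε := by
  simp only [Dense, Metric.mem_closure_iff, dist_eq_norm, gt_iff_lt]

theorem stmt_4_general
    {A B : Type*}
    [NonUnitalRing A] [Module ℂ A] [SMulCommClass ℂ A A] [IsScalarTower ℂ A A]
    [NonUnitalRing B] [Module ℂ B] [SMulCommClass ℂ B B] [IsScalarTower ℂ B B]
    -- the inner products of the two Hilbert algebras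
    (cA : InnerProductSpace.Core ℂ A) (cB : InnerProductSpace.Core ℂ B)
    -- Hilbert algebra axiom (4): the span of products is dense
    (hA4 : ∀ a : A, ∀ ε : ℝ, 0 < ε → ∃ b ∈ Submodule.span ℂ {p : A | ∃ x y : A, p = x * y},
      Real.sqrt (cA.inner (a - b) (a - b)).re < ε)
    (hB4 : ∀ a : B, ∀ ε : ℝ, 0 < ε → ∃ b ∈ Submodule.span ℂ {p : B | ∃ x y : B, p = x * y},
      Real.sqrt (cB.inner (a - b) (a - b)).re < ε)
    -- the sesquilinear form `Bf` on `A ⊗[ℂ] B` determined by the inner products of the factors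
    (Bf : A ⊗[ℂ] B → A ⊗[ℂ] B → ℂ)
    (Bf_add_left : ∀ z z' w : A ⊗[ℂ] B, Bf (z + z') w = Bf z w + Bf z' w)
    (Bf_smul_left : ∀ (c : ℂ) (z w : A ⊗[ℂ] B), Bf (c • z) w = conj c * Bf z w)
    (Bf_tmul : ∀ (x x' : A) (y y' : B),
      Bf (x ⊗ₜ[ℂ] y) (x' ⊗ₜ[ℂ] y') = cA.inner x x' * cB.inner y y')
    -- `Bf` is an inner product
    (Bf_conj_symm : ∀ z w : A ⊗[ℂ] B, conj (Bf w z) = Bf z w)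
    (Bf_nonneg : ∀ z : A ⊗[ℂ] B, 0 ≤ (Bf z z).re)
    (Bf_definite : ∀ z : A ⊗[ℂ] B, Bf z z = 0 → z = 0) :
    ∀ ζ : A ⊗[ℂ] B, ∀ ε : ℝ, 0 < ε →
      ∃ w ∈ Submodule.span ℂ {p : A ⊗[ℂ] B | ∃ z z' : A ⊗[ℂ] B, p = z * z'},
        Real.sqrt (Bf (ζ - w) (ζ - w)).re < ε := by
  let : NormedAddCommGroup A := cA.toNormedAddCommGroup
  let : InnerProductSpace ℂ A := InnerProductSpace.ofCore cA.toCore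
  let : NormedAddCommGroup B := cB.toNormedAddCommGroup
  let : InnerProductSpace ℂ B := InnerProductSpace.ofCore cB.toCore
  let cT : InnerProductSpace.Core ℂ (A ⊗[ℂ] B) :=
    { inner := Bf
      conj_inner_symm := Bf_conj_symm
      re_inner_nonneg := Bf_nonneg
      add_left := Bf_add_left
      smul_left := fun z w c => Bf_smul_left c z w
      definite := Bf_definite }
  let : NormedAddCommGroup (A ⊗[ℂ] B) := cT.toNormedAddCommGroup
  let : InnerProductSpace ℂ (A ⊗[ℂ] B) := InnerProductSpace.ofCore cT.toCore
  have norm_tmul (x : A) (y : B) : ‖x ⊗ₜ[ℂ] y‖ = ‖x‖ * ‖y‖ := by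
    have h : (Bf (x ⊗ₜ y) (x ⊗ₜ y)).re = (‖x‖ * ‖y‖) ^ 2 := by
      rw [Bf_tmul]
      change (inner ℂ x x * inner ℂ y y).re = _
      rw [inner_self_eq_norm_sq_to_K, inner_self_eq_norm_sq_to_K, mul_pow]
      exact_mod_cast RCLike.ofReal_re (K := ℂ) _
    change √(Bf _ _).re = _
    rw [h, Real.sqrt_sq (by positivity)]
  have hcont : Continuous fun p : A × B => p.1 ⊗ₜ[ℂ] p.2 :=
    (LinearMap.mkContinuous₂ (TensorProduct.mk ℂ A B) 1
      fun x y => by simp [norm_tmul]).continuous₂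
  have hdense : Dense (span ℂ {p : A ⊗[ℂ] B | ∃ z z' : A ⊗[ℂ] B, p = z * z'} : Set (A ⊗[ℂ] B)) := by
    refine (TensorProduct.dense_span_image2_tmul hcont ?_ ?_).mono span_image2_tmul_span_mul_le
    · exact dense_iff_forall_exists_norm_sub_lt.mpr hA4
    · exact dense_iff_forall_exists_norm_sub_lt.mpr hB4
  exact dense_iff_forall_exists_norm_sub_lt.mp hdense

/-- For (not necessarily unital) Hilbert algebras `A` and `B` over `ℂ` and the
inner product `Bf` on the tensor product *-algebra `A ⊗[ℂ] B` determined by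
`Bf (x ⊗ y) (x' ⊗ y') = ⟪x, x'⟫₁ * ⟪y, y'⟫₂`, with induced norm `‖z‖_B = √(Bf z z).re`,
the linear span of the set of products `{z * w : z, w ∈ A ⊗[ℂ] B}` is `‖·‖_B`-dense in
`A ⊗[ℂ] B`. -/
theorem stmt_4
    {A B : Type*}
    [NonUnitalRing A] [Module ℂ A] [SMulCommClass ℂ A A] [IsScalarTower ℂ A A]
    [StarRing A] [StarModule ℂ A]
    [NonUnitalRing B] [Module ℂ B] [SMulCommClass ℂ B B] [IsScalarTower ℂ B B]
    [StarRing B] [StarModule ℂ B]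
    -- the inner products of the two Hilbert algebras
    (cA : InnerProductSpace.Core ℂ A) (cB : InnerProductSpace.Core ℂ B)
    -- Hilbert algebra axiom (1): left multiplications are continuous (bounded)
    (hA1 : ∀ x : A, ∃ C : ℝ, 0 ≤ C ∧ ∀ y : A,
      Real.sqrt (cA.inner (x * y) (x * y)).re ≤ C * Real.sqrt (cA.inner y y).re)
    (hB1 : ∀ x : B, ∃ C : ℝ, 0 ≤ C ∧ ∀ y : B,
      Real.sqrt (cB.inner (x * y) (x * y)).re ≤ C * Real.sqrt (cB.inner y y).re)
    -- Hilbert algebra axiom (2): ⟪xy, z⟫ = ⟪y, x*z⟫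
    (hA2 : ∀ x y z : A, cA.inner (x * y) z = cA.inner y (star x * z))
    (hB2 : ∀ x y z : B, cB.inner (x * y) z = cB.inner y (star x * z))
    -- Hilbert algebra axiom (3): ⟪x, y⟫ = ⟪y*, x*⟫
    (hA3 : ∀ x y : A, cA.inner x y = cA.inner (star y) (star x))
    (hB3 : ∀ x y : B, cB.inner x y = cB.inner (star y) (star x))
    -- Hilbert algebra axiom (4): the span of products is dense
    (hA4 : ∀ a : A, ∀ ε : ℝ, 0 < ε → ∃ b ∈ Submodule.span ℂ {p : A | ∃ x y : A, p = x * y},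
      Real.sqrt (cA.inner (a - b) (a - b)).re < ε)
    (hB4 : ∀ a : B, ∀ ε : ℝ, 0 < ε → ∃ b ∈ Submodule.span ℂ {p : B | ∃ x y : B, p = x * y},
      Real.sqrt (cB.inner (a - b) (a - b)).re < ε)
    -- the involution of the tensor product *-algebra `A ⊗[ℂ] B`
    (st : A ⊗[ℂ] B → A ⊗[ℂ] B)
    (st_add : ∀ z w : A ⊗[ℂ] B, st (z + w) = st z + st w)
    (st_tmul : ∀ (x : A) (y : B), st (x ⊗ₜ[ℂ] y) = star x ⊗ₜ[ℂ] star y)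
    -- the sesquilinear form `Bf` on `A ⊗[ℂ] B` determined by the inner products of the factors
    (Bf : A ⊗[ℂ] B → A ⊗[ℂ] B → ℂ)
    (Bf_add_left : ∀ z z' w : A ⊗[ℂ] B, Bf (z + z') w = Bf z w + Bf z' w)
    (Bf_add_right : ∀ z w w' : A ⊗[ℂ] B, Bf z (w + w') = Bf z w + Bf z w')
    (Bf_smul_left : ∀ (c : ℂ) (z w : A ⊗[ℂ] B), Bf (c • z) w = conj c * Bf z w)
    (Bf_smul_right : ∀ (c : ℂ) (z w : A ⊗[ℂ] B), Bf z (c • w) = c * Bf z w)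
    (Bf_tmul : ∀ (x x' : A) (y y' : B),
      Bf (x ⊗ₜ[ℂ] y) (x' ⊗ₜ[ℂ] y') = cA.inner x x' * cB.inner y y')
    -- `Bf` is an inner product
    (Bf_conj_symm : ∀ z w : A ⊗[ℂ] B, conj (Bf w z) = Bf z w)
    (Bf_nonneg : ∀ z : A ⊗[ℂ] B, 0 ≤ (Bf z z).re)
    (Bf_definite : ∀ z : A ⊗[ℂ] B, Bf z z = 0 → z = 0) :
    ∀ ζ : A ⊗[ℂ] B, ∀ ε : ℝ, 0 < ε →
      ∃ w ∈ Submodule.span ℂ {p : A ⊗[ℂ] B | ∃ z z' : A ⊗[ℂ] B, p = z * z'},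
        Real.sqrt (Bf (ζ - w) (ζ - w)).re < ε :=
  stmt_4_general cA cB hA4 hB4 Bf Bf_add_left Bf_smul_left Bf_tmul Bf_conj_symm Bf_nonneg
    Bf_definite
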